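/- arXiv:2406.07468 — 5 statements merged into one kernel-verified Lean document; each statement's English description precedes it below -/
import Mathlib

section
/- Let q = 2^n and let G : 𝔽_q → 𝔽_q be the power function G(x) = x^d for some positive integer d. If G is not APN, then 9(q−1) ≤ APN-def(G) ≤ (1/4)(q² + 4q + 4)(q−1) (equivalently, 36(q−1) ≤ 4·APN-def(G) and 4·APN-def(G) ≤ (q² + 4q + 4)(q−1)). -/
namespace APNPaper

open Finset

variable {F : Type*} [Field F] [Fintype F] [DecidableEq F]

/-- `δ_G(a,b)`: the number of `x` with `D_aG(x) = G(x) + G(x+a) = b`. -/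
def delta (G : F → F) (a b : F) : ℕ :=
  (Finset.univ.filter fun x : F => G x + G (x + a) = b).card

/-- `∇_G(a,x) = δ_G(a, D_aG(x))`. -/
def nabla (G : F → F) (a x : F) : ℕ := delta G a (G x + G (x + a))

/-- `G` is almost perfect nonlinear. -/
def IsAPN (G : F → F) : Prop := ∀ a : F, a ≠ 0 → ∀ b : F, delta G a b ≤ 2

/-- The derivative `D_aG` is 2-to-1, i.e. `G` satisfies property `(p_a)`. -/
def TwoToOne (G : F → F) (a : F) : Prop :=
  ∀ b : F, delta G a b = 0 ∨ delta G a b = 2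

instance instDecTwoToOne (G : F → F) (a : F) : Decidable (TwoToOne G a) := by
  unfold TwoToOne; infer_instance

/-- The row spectrum `R-Spec_q(G)`. -/
def RSpec (G : F → F) : Finset F :=
  (Finset.univ.erase (0 : F)).filter fun a => TwoToOne G a

/-- `S_a = {x : ∇_G(a,x) = 2}`. -/
def Sset (G : F → F) (a : F) : Finset F :=
  Finset.univ.filter fun x : F => nabla G a x = 2

/-- `w_{S_a^c} = Σ_{b : δ_G(a,b) > 2} (δ_G(a,b)/2)²`. -/
def wS (G : F → F) (a : F) : ℤ :=
  ∑ b : F, if 2 < delta G a b then ((delta G a b / 2 : ℕ) : ℤ) ^ 2 else 0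

/-- `χ_a = 1` if `S_a = 𝔽_q`, and `0` otherwise. -/
def chi (G : F → F) (a : F) : ℤ :=
  if Sset G a = Finset.univ then 1 else 0

/-- `𝒟(G) = Σ_{a ≠ 0} (|S_a| − w_{S_a^c} + χ_a)`. -/
def Dscr (G : F → F) : ℤ :=
  ∑ a ∈ Finset.univ.erase (0 : F), (((Sset G a).card : ℤ) - wS G a + chi G a)

/-- The APN-defect `APN-def(G) = q² − 1 − 𝒟(G)`. -/
def APNdef (G : F → F) : ℤ := (Fintype.card F : ℤ) ^ 2 - 1 - Dscr G

/-- The differential uniformity `δ_G`. -/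
def diffUnif (G : F → F) : ℕ :=
  ((Finset.univ.erase (0 : F)) ×ˢ Finset.univ).sup fun p => delta G p.1 p.2

/-- The set of vanishing flats of `G`. -/
def VF (G : F → F) : Set (Finset F) :=
  {S | ∃ x y z : F, x ≠ y ∧ x ≠ z ∧ y ≠ z ∧
    G x + G y + G z + G (x + y + z) = 0 ∧ S = ({x, y, z, x + y + z} : Finset F)}

/-- The absolute trace `Tr(z) = z + z² + ⋯ + z^{2^{n-1}}` (with values in `{0,1} ⊆ F`). -/
def Tr (n : ℕ) (z : F) : F := ∑ i ∈ Finset.range n, z ^ (2 ^ i)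

/-- The modification `F_{0,α}` of the inverse function: the values of the inverse
function at `0` and `α` are swapped. -/
def Fmod (α : F) : F → F :=
  fun x => if x = 0 then α⁻¹ else if x = α then 0 else x⁻¹

/-! Summing over directions, `APN-def(G) = ∑_{a ≠ 0} (q + 1 - (|S_a| - w_{S_a^c} + χ_a))`, and the
`a`-th summand is `1 - χ_a + ∑_b f(δ_G(a,b))`, where `f(k) = k - 2·[k = 2] + [k > 2]·⌊k/2⌋²` is the
contribution of a fibre of `D_aG` of size `k`. Since `0 ≤ f(k)`, `4 f(k) ≤ k (q + 4)` for `k ≤ q` and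
`∑_b δ_G(a,b) = q`, each summand is at most `(q + 2)²/4`, whatever `G` is. In characteristic 2 the
fibres of `D_aG` are unions of pairs `{x, x + a}`, so a fibre of size `> 2` has size `≥ 4`; it then
contributes at least `8` and forces `χ_a = 0`, so the summand is at least `9`. For `G(x) = x^d` one has
`D_aG(ax) = a^d D_1G(x)`, so if `G` is not APN such a fibre exists in every direction. -/

lemma even_card_of_involutive {α : Type*} [DecidableEq α] {σ : α → α}
    (hσ : Function.Involutive σ) (hfree : ∀ x, σ x ≠ x) {s : Finset α}
    (hs : ∀ x ∈ s, σ x ∈ s) : Even #s := by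
  have hfiber : ∀ p ∈ s.image (fun x => s(x, σ x)), #{y ∈ s | s(y, σ y) = p} = 2 := by
    simp only [mem_image]
    rintro _ ⟨x, hx, rfl⟩
    have : {y ∈ s | s(y, σ y) = s(x, σ x)} = {x, σ x} := by
      ext y
      simp only [mem_filter, Sym2.eq_iff, mem_insert, mem_singleton]
      constructor
      · rintro ⟨-, ⟨rfl, -⟩ | ⟨rfl, -⟩⟩ <;> simp
      · rintro (rfl | rfl)
        · exact ⟨hx, .inl ⟨rfl, rfl⟩⟩
        · exact ⟨hs x hx, .inr ⟨rfl, hσ x⟩⟩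
    rw [this, card_pair (hfree x).symm]
  rw [card_eq_sum_card_image (fun x => s(x, σ x)) s, sum_congr rfl hfiber, sum_const, smul_eq_mul]
  exact even_two.mul_left _

lemma cast_card_erase_zero : (#(univ.erase (0 : F)) : ℤ) = Fintype.card F - 1 := by
  rw [card_erase_of_mem (mem_univ 0), card_univ, Nat.cast_sub Fintype.card_pos, Nat.cast_one]

def fiberDefect (k : ℕ) : ℤ :=
  k - (if k = 2 then 2 else 0) + (if 2 < k then ((k / 2 : ℕ) : ℤ) ^ 2 else 0)

section Fibres

variable (G : F → F) (a : F)

lemma sum_delta : ∑ b, (delta G a b : ℤ) = Fintype.card F := by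
  exact_mod_cast (card_eq_sum_card_fiberwise fun x _ => mem_univ (G x + G (x + a))).symm

lemma card_Sset : #(Sset G a) = ∑ b, if delta G a b = 2 then 2 else 0 := by
  rw [Sset, card_eq_sum_card_fiberwise fun x _ => mem_univ (G x + G (x + a))]
  refine sum_congr rfl fun b _ => ?_
  rw [filter_filter, filter_congr fun x _ => and_congr_left fun hx => by rw [nabla, hx]]
  split_ifs with h
  · simp only [h, true_and]; exact h
  · simp [h]

def directionDefect : ℤ :=
  Fintype.card F + 1 - (#(Sset G a) - wS G a + chi G a)

lemma APNdef_eq_sum_directionDefect :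
    APNdef G = ∑ a ∈ univ.erase 0, directionDefect G a := by
  simp only [APNdef, Dscr, directionDefect, sum_sub_distrib, sum_const, cast_card_erase_zero,
    nsmul_eq_mul]
  ring

lemma directionDefect_eq :
    directionDefect G a = 1 - chi G a + ∑ b, fiberDefect (delta G a b) := by
  simp only [directionDefect, fiberDefect, card_Sset, wS, ← sum_delta G a, sum_add_distrib, sum_sub_distrib]
  push_cast
  ring

lemma chi_nonneg : 0 ≤ chi G a := by
  unfold chi; split_ifs <;> norm_num

lemma chi_eq_zero_of_two_lt_delta {b : F} (hb : 2 < delta G a b) : chi G a = 0 := by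
  obtain ⟨x, hx⟩ := card_pos.mp (zero_lt_two.trans hb)
  have hxb : G x + G (x + a) = b := (mem_filter.mp hx).2
  have hxS : x ∉ Sset G a := fun hS => by
    have h2 := (mem_filter.mp hS).2
    rw [nabla, hxb] at h2
    omega
  rw [chi, if_neg fun h : Sset G a = univ => hxS (h ▸ mem_univ x)]

end Fibres

lemma fiberDefect_nonneg (k : ℕ) : 0 ≤ fiberDefect k := by
  unfold fiberDefect; split_ifs <;> simp_all; positivity

lemma fiberDefect_le {k q : ℕ} (hk : k ≤ q) : 4 * fiberDefect k ≤ k * (q + 4) := by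
  have hsq : 4 * (((k / 2 : ℕ) : ℤ) ^ 2) ≤ k * k := by
    have : 2 * (k / 2) ≤ k := Nat.mul_div_le k 2
    have : (2 * (k / 2 : ℕ) : ℤ) ≤ k := by exact_mod_cast this
    nlinarith
  have hkq : (k : ℤ) ≤ q := by exact_mod_cast hk
  unfold fiberDefect
  split_ifs <;> nlinarith

lemma eight_le_fiberDefect {k : ℕ} (hk : 4 ≤ k) : 8 ≤ fiberDefect k := by
  have h2 : (2 : ℤ) ≤ (k / 2 : ℕ) := by exact_mod_cast (Nat.le_div_iff_mul_le two_pos).mpr hk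
  have hk' : (4 : ℤ) ≤ k := by exact_mod_cast hk
  rw [fiberDefect, if_neg (by omega), if_pos (by omega)]
  nlinarith

section Direction

variable (G : F → F) (a : F)

lemma directionDefect_le :
    4 * directionDefect G a ≤ ((Fintype.card F : ℤ) + 2) ^ 2 := by
  have hfib : 4 * ∑ b, fiberDefect (delta G a b) ≤
      ∑ b, (delta G a b : ℤ) * (Fintype.card F + 4) := by
    rw [mul_sum]
    exact sum_le_sum fun b _ => fiberDefect_le (card_filter_le _ _)
  rw [← sum_mul, sum_delta] at hfib
  rw [directionDefect_eq]
  nlinarith [chi_nonneg G a]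

variable [CharP F 2] {a}

lemma even_delta (ha : a ≠ 0) (b : F) : Even (delta G a b) := by
  refine even_card_of_involutive (σ := (· + a))
    (fun x => by simp [add_assoc, CharTwo.add_self_eq_zero]) (fun x => by simpa using ha)
    fun x hx => ?_
  simp only [mem_filter, mem_univ, true_and] at hx ⊢
  rw [add_assoc, CharTwo.add_self_eq_zero, add_zero, add_comm, hx]

lemma nine_le_directionDefect (ha : a ≠ 0) {b : F} (hb : 2 < delta G a b) :
    9 ≤ directionDefect G a := by
  have h4 : 4 ≤ delta G a b := by
    have := even_iff_two_dvd.mp (even_delta G ha b)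
    omega
  have h8 : 8 ≤ ∑ b, fiberDefect (delta G a b) :=
    (eight_le_fiberDefect h4).trans
      (single_le_sum (fun b _ => fiberDefect_nonneg (delta G a b)) (mem_univ b))
  rw [directionDefect_eq, chi_eq_zero_of_two_lt_delta G a hb]
  omega

end Direction

section Power

variable {G : F → F} {d : ℕ}

lemma delta_mul_pow_of_pow (hG : ∀ x, G x = x ^ d) {a : F} (ha : a ≠ 0) (b : F) :
    delta G a (a ^ d * b) = delta G 1 b := by
  have hscale (x : F) : G (a * x) + G (a * x + a) = a ^ d * (G x + G (x + 1)) := by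
    rw [← mul_add_one, hG, hG, hG, hG, mul_pow, mul_pow, mul_add]
  exact (card_equiv (Equiv.mulLeft₀ a ha) fun x => by simp [hscale, pow_ne_zero d ha]).symm

lemma exists_two_lt_delta_of_not_isAPN (hG : ∀ x, G x = x ^ d) (hnotAPN : ¬ IsAPN G) {a : F}
    (ha : a ≠ 0) : ∃ b, 2 < delta G a b := by
  obtain ⟨a₀, ha₀, b₀, hb₀⟩ : ∃ a₀, a₀ ≠ 0 ∧ ∃ b₀, 2 < delta G a₀ b₀ := by
    simpa [IsAPN] using hnotAPN
  refine ⟨a ^ d * ((a₀ ^ d)⁻¹ * b₀), ?_⟩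
  rwa [delta_mul_pow_of_pow hG ha, ← delta_mul_pow_of_pow hG ha₀,
    mul_inv_cancel_left₀ (pow_ne_zero d ha₀)]

end Power

theorem stmt_0_general (n d : ℕ)
    [CharP F 2] (hcard : Fintype.card F = 2 ^ n)
    (G : F → F) (hG : ∀ x : F, G x = x ^ d)
    (hnotAPN : ¬ IsAPN G) :
    36 * ((2 : ℤ) ^ n - 1) ≤ 4 * APNdef G ∧
    4 * APNdef G ≤ (((2 : ℤ) ^ n) ^ 2 + 4 * 2 ^ n + 4) * ((2 : ℤ) ^ n - 1) := by
  have hq : (Fintype.card F : ℤ) = 2 ^ n := by exact_mod_cast hcard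
  have hunits : (#(univ.erase (0 : F)) : ℤ) = 2 ^ n - 1 := by rw [cast_card_erase_zero, hq]
  rw [APNdef_eq_sum_directionDefect]
  constructor
  · calc 36 * ((2 : ℤ) ^ n - 1) = 4 * (#(univ.erase (0 : F)) • 9) := by
          rw [nsmul_eq_mul, hunits]; ring
      _ ≤ 4 * ∑ a ∈ univ.erase 0, directionDefect G a := by
          gcongr
          refine card_nsmul_le_sum _ _ _ fun a ha => ?_
          obtain ⟨b, hb⟩ := exists_two_lt_delta_of_not_isAPN hG hnotAPN (ne_of_mem_erase ha)
          exact nine_le_directionDefect G (ne_of_mem_erase ha) hb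
  · calc 4 * ∑ a ∈ univ.erase 0, directionDefect G a
        = ∑ a ∈ univ.erase 0, 4 * directionDefect G a := mul_sum _ _ _
      _ ≤ #(univ.erase (0 : F)) • ((Fintype.card F : ℤ) + 2) ^ 2 :=
          sum_le_card_nsmul _ _ _ fun a _ => directionDefect_le G a
      _ = (((2 : ℤ) ^ n) ^ 2 + 4 * 2 ^ n + 4) * ((2 : ℤ) ^ n - 1) := by
          rw [nsmul_eq_mul, hunits, hq]; ring

/-- bounds on the APN-defect of a non-APN power function. -/
theorem stmt_0 (n d : ℕ) (hn : 0 < n) (hd : 0 < d)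
    [CharP F 2] (hcard : Fintype.card F = 2 ^ n)
    (G : F → F) (hG : ∀ x : F, G x = x ^ d)
    (hnotAPN : ¬ IsAPN G) :
    36 * ((2 : ℤ) ^ n - 1) ≤ 4 * APNdef G ∧
    4 * APNdef G ≤ (((2 : ℤ) ^ n) ^ 2 + 4 * 2 ^ n + 4) * ((2 : ℤ) ^ n - 1) :=
  stmt_0_general n d hcard G hG hnotAPN

end APNPaper
end

section
/- Let n be even, q = 2^n, and let F : 𝔽_q → 𝔽_q be the inverse function F(x) = x^{q−2}. Then APN-def(F) = 9(q−1); equivalently, 𝒟(F) = (q−1)(q−8). -/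
/-!
In characteristic 2, for `a ≠ 0` and `x ∉ {0, a}` one has `x⁻¹ + (x + a)⁻¹ = a / (x (x + a))`, so
away from `{0, a}` the fibre of `D_aF` over `b` is the set of roots of `b x (x + a) = a`. Two roots
`x, y` satisfy `b (x + y) (x + y + a) = 0`, hence every fibre over `b ≠ a⁻¹` is empty or a coset
`{x, x + a}`. The fibre over `a⁻¹` consists of `0`, `a` and the roots of `x² + a x + a² = 0`; for even
`n` we have `3 ∣ q - 1`, so `𝔽_q` contains a primitive cube root of unity `ω` and this fibre is
`a 𝔽₄ = {0, a, aω, aω + a}`. Hence `|S_a| = q - 4`, `w_{S_a^c} = (4 / 2)² = 4` and `χ_a = 0` for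
every `a ≠ 0`, and `𝒟(F) = (q - 1)(q - 8)`.
-/

namespace APNPaper

open Finset

variable {F : Type*} [Field F] [Fintype F] [DecidableEq F]

lemma three_dvd_two_pow_sub_one {n : ℕ} (hn : Even n) : 3 ∣ 2 ^ n - 1 := by
  obtain ⟨m, rfl⟩ := hn
  simpa [← two_mul, pow_mul] using Nat.sub_dvd_pow_sub_pow 4 1 m

omit [DecidableEq F] in
lemma exists_sq_add_self_add_one_eq_zero (h : 3 ∣ Fintype.card F - 1) :
    ∃ ω : F, ω ^ 2 + ω + 1 = 0 := by
  classical
  have : Fact (Nat.Prime 3) := ⟨Nat.prime_three⟩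
  obtain ⟨g, hg⟩ := exists_prime_orderOf_dvd_card 3 (Fintype.card_units (α := F) ▸ h)
  have hω : IsPrimitiveRoot (g : F) 3 :=
    IsPrimitiveRoot.coe_units_iff.mpr (hg ▸ IsPrimitiveRoot.orderOf g :)
  have hsum := hω.geom_sum_eq_zero (by norm_num)
  simp only [sum_range_succ, sum_range_zero] at hsum
  exact ⟨g, by linear_combination hsum⟩

omit [DecidableEq F] in
lemma pow_card_sub_two_eq_inv (h : 2 < Fintype.card F) (x : F) :
    x ^ (Fintype.card F - 2) = x⁻¹ := by
  rcases eq_or_ne x 0 with rfl | hx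
  · rw [zero_pow (by omega), inv_zero]
  · refine eq_inv_of_mul_eq_one_left ?_
    rw [← pow_succ, show Fintype.card F - 2 + 1 = Fintype.card F - 1 by omega]
    exact FiniteField.pow_card_sub_one_eq_one x hx

def derivFiber (G : F → F) (a b : F) : Finset F :=
  univ.filter fun x => G x + G (x + a) = b

lemma card_derivFiber (G : F → F) (a b : F) : (derivFiber G a b).card = delta G a b := rfl

lemma mem_derivFiber {G : F → F} {a b x : F} :
    x ∈ derivFiber G a b ↔ G x + G (x + a) = b := by
  simp [derivFiber]

section CharTwo

variable [CharP F 2]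

lemma add_mem_derivFiber {G : F → F} {a b x : F} (hx : x ∈ derivFiber G a b) :
    x + a ∈ derivFiber G a b := by
  rw [mem_derivFiber, CharTwo.add_cancel_right, add_comm]
  exact mem_derivFiber.mp hx

omit [Fintype F] [DecidableEq F] in
lemma inv_add_inv_add_of_eq_zero_or_eq {a x : F} (hx : x = 0 ∨ x = a) :
    x⁻¹ + (x + a)⁻¹ = a⁻¹ := by
  rcases hx with rfl | rfl <;> simp [CharTwo.add_self_eq_zero]

omit [Fintype F] [DecidableEq F] in
lemma inv_add_inv_add_eq_iff {a b x : F} (hx : x ≠ 0) (hxa : x ≠ a) :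
    x⁻¹ + (x + a)⁻¹ = b ↔ b * (x * (x + a)) = a := by
  have hxa' : x + a ≠ 0 := fun h => hxa (CharTwo.add_eq_zero.mp h)
  rw [inv_add_inv hx hxa', CharTwo.add_cancel_left, div_eq_iff (mul_ne_zero hx hxa'), eq_comm]

lemma derivFiber_inv_eq_pair {a b x : F} (ha : a ≠ 0) (hb : b ≠ a⁻¹)
    (hx : x ∈ derivFiber (·⁻¹) a b) : derivFiber (·⁻¹) a b = {x, x + a} := by
  have quadratic : ∀ y ∈ derivFiber (·⁻¹) a b, b * (y * (y + a)) = a := by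
    intro y hy
    rw [mem_derivFiber] at hy
    have hy0 : y ≠ 0 := fun h => hb (hy ▸ inv_add_inv_add_of_eq_zero_or_eq (.inl h))
    have hya : y ≠ a := fun h => hb (hy ▸ inv_add_inv_add_of_eq_zero_or_eq (.inr h))
    exact (inv_add_inv_add_eq_iff hy0 hya).mp hy
  have hb0 : b ≠ 0 := by
    rintro rfl
    exact ha (by simpa using (quadratic x hx).symm)
  ext y
  simp only [mem_insert, mem_singleton]
  refine ⟨fun hy => ?_, ?_⟩
  · have hprod : b * ((y + x) * (y + x + a)) = 0 := by
      linear_combination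
        quadratic y hy - quadratic x hx + b * x * (y + x + a) * CharTwo.two_eq_zero (R := F)
    rcases (mul_eq_zero.mp ((mul_eq_zero.mp hprod).resolve_left hb0)) with h | h
    · exact .inl (CharTwo.add_eq_zero.mp h)
    · exact .inr (CharTwo.add_eq_zero.mp (by rwa [add_assoc] at h))
  · rintro (rfl | rfl)
    exacts [hx, add_mem_derivFiber hx]

lemma delta_inv_eq_zero_or_two {a b : F} (ha : a ≠ 0) (hb : b ≠ a⁻¹) :
    delta (·⁻¹) a b = 0 ∨ delta (·⁻¹) a b = 2 := by
  rw [← card_derivFiber]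
  rcases (derivFiber (·⁻¹) a b).eq_empty_or_nonempty with h | ⟨x, hx⟩
  · simp [h]
  · rw [derivFiber_inv_eq_pair ha hb hx, card_pair (by simpa using ha)]
    exact .inr rfl

lemma derivFiber_inv_inv {a ω : F} (ha : a ≠ 0) (hω : ω ^ 2 + ω + 1 = 0) :
    derivFiber (·⁻¹) a a⁻¹ = {0, a, a * ω, a * ω + a} := by
  ext x
  simp only [mem_derivFiber, mem_insert, mem_singleton]
  by_cases hx : x = 0 ∨ x = a
  · simp only [inv_add_inv_add_of_eq_zero_or_eq hx, true_iff]
    tauto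
  push Not at hx
  have hfactor : x * (x + a) + a * a = (x + a * ω) * (x + a * ω + a) := by
    linear_combination (-a * a) * hω + (a * a - a * ω * x) * CharTwo.two_eq_zero (R := F)
  rw [inv_add_inv_add_eq_iff hx.1 hx.2, inv_mul_eq_iff_eq_mul₀ ha, ← CharTwo.add_eq_zero, hfactor]
  simp [hx.1, hx.2, CharTwo.add_eq_zero, add_assoc]

lemma delta_inv_inv {a ω : F} (ha : a ≠ 0) (hω : ω ^ 2 + ω + 1 = 0) :
    delta (·⁻¹) a a⁻¹ = 4 := by
  have hω0 : ω ≠ 0 := by rintro rfl; simp at hω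
  have hω1 : ω ≠ 1 := by
    rintro rfl
    exact one_ne_zero (by linear_combination hω - CharTwo.two_eq_zero (R := F) : (1 : F) = 0)
  have hω_add_one : ω + 1 ≠ 0 := fun h => hω1 (CharTwo.add_eq_zero.mp h)
  rw [← card_derivFiber, derivFiber_inv_inv ha hω, ← mul_add_one]
  rw [card_insert_of_notMem, card_insert_of_notMem, card_pair]
  all_goals simp [ha, ha.symm, hω0, hω1, hω_add_one]

lemma Sset_inv {a ω : F} (ha : a ≠ 0) (hω : ω ^ 2 + ω + 1 = 0) :
    Sset (·⁻¹) a = (derivFiber (·⁻¹) a a⁻¹)ᶜ := by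
  ext x
  have hx : x ∈ derivFiber (·⁻¹) a (x⁻¹ + (x + a)⁻¹) := mem_derivFiber.mpr rfl
  rw [Sset, mem_filter, mem_compl, nabla]
  simp only [mem_univ, true_and]
  by_cases hb : x⁻¹ + (x + a)⁻¹ = a⁻¹
  · rw [hb] at hx ⊢
    simp [delta_inv_inv ha hω, hx]
  · rw [← card_derivFiber, derivFiber_inv_eq_pair ha hb hx, card_pair (by simpa using ha)]
    simpa [mem_derivFiber] using hb

lemma card_Sset_inv_add_four {a ω : F} (ha : a ≠ 0) (hω : ω ^ 2 + ω + 1 = 0) :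
    (Sset (·⁻¹) a).card + 4 = Fintype.card F := by
  rw [Sset_inv ha hω, ← delta_inv_inv ha hω, ← card_derivFiber, card_compl_add_card]

lemma chi_inv {a ω : F} (ha : a ≠ 0) (hω : ω ^ 2 + ω + 1 = 0) : chi (·⁻¹) a = 0 := by
  have h0 : (0 : F) ∈ derivFiber (·⁻¹) a a⁻¹ :=
    mem_derivFiber.mpr (inv_add_inv_add_of_eq_zero_or_eq (.inl rfl))
  rw [chi, if_neg]
  intro h
  have h0' : (0 : F) ∈ Sset (·⁻¹) a := h ▸ mem_univ 0
  rw [Sset_inv ha hω, mem_compl] at h0'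
  exact h0' h0

lemma wS_inv {a ω : F} (ha : a ≠ 0) (hω : ω ^ 2 + ω + 1 = 0) : wS (·⁻¹) a = 4 := by
  rw [wS, sum_eq_single_of_mem a⁻¹ (mem_univ _)]
  · simp [delta_inv_inv ha hω]
  · intro b _ hb
    rcases delta_inv_eq_zero_or_two ha hb with h | h <;> simp [h]

lemma Dscr_inv {ω : F} (hω : ω ^ 2 + ω + 1 = 0) :
    Dscr (fun x : F => x⁻¹) = ((Fintype.card F : ℤ) - 1) * ((Fintype.card F : ℤ) - 8) := by
  have hterm : ∀ a ∈ univ.erase (0 : F),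
      ((Sset (·⁻¹) a).card : ℤ) - wS (·⁻¹) a + chi (·⁻¹) a = (Fintype.card F : ℤ) - 8 := by
    intro a ha
    have ha : a ≠ 0 := ne_of_mem_erase ha
    have hcard := card_Sset_inv_add_four ha hω
    rw [wS_inv ha hω, chi_inv ha hω]
    omega
  rw [Dscr, sum_congr rfl hterm, sum_const, card_erase_of_mem (mem_univ _), card_univ,
    nsmul_eq_mul, Nat.cast_sub Fintype.card_pos, Nat.cast_one]

end CharTwo

theorem stmt_1_general (n : ℕ) (heven : Even n)
    [CharP F 2] (hcard : Fintype.card F = 2 ^ n) :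
    APNdef (fun x : F => x ^ (2 ^ n - 2)) = 9 * ((2 : ℤ) ^ n - 1) ∧
    Dscr (fun x : F => x ^ (2 ^ n - 2)) = ((2 : ℤ) ^ n - 1) * ((2 : ℤ) ^ n - 8) := by
  obtain ⟨ω, hω⟩ := exists_sq_add_self_add_one_eq_zero (F := F)
    (hcard ▸ three_dvd_two_pow_sub_one heven)
  have hq : 2 < Fintype.card F := by
    obtain ⟨m, rfl⟩ := heven
    have hm : m ≠ 0 := by
      rintro rfl
      simpa [hcard] using Fintype.one_lt_card (α := F)
    rw [hcard, ← two_mul, pow_mul]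
    exact lt_of_lt_of_le (by norm_num) (Nat.le_self_pow hm 4)
  have hpow : (fun x : F => x ^ (2 ^ n - 2)) = (·⁻¹) :=
    funext (hcard ▸ pow_card_sub_two_eq_inv hq)
  have hD : Dscr (fun x : F => x ^ (2 ^ n - 2)) = ((2 : ℤ) ^ n - 1) * ((2 : ℤ) ^ n - 8) := by
    rw [hpow, Dscr_inv hω, hcard]
    push_cast
    ring
  refine ⟨?_, hD⟩
  rw [APNdef, hD, hcard]
  push_cast
  ring

/-- the APN-defect of the inverse function for even `n` is `9(q−1)`. -/
theorem stmt_1 (n : ℕ) (hn : 0 < n) (heven : Even n)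
    [CharP F 2] (hcard : Fintype.card F = 2 ^ n) :
    APNdef (fun x : F => x ^ (2 ^ n - 2)) = 9 * ((2 : ℤ) ^ n - 1) ∧
    Dscr (fun x : F => x ^ (2 ^ n - 2)) = ((2 : ℤ) ^ n - 1) * ((2 : ℤ) ^ n - 8) :=
  stmt_1_general n heven hcard

end APNPaper
end

section
/- Let n be even, q = 2^n, and let F : 𝔽_q → 𝔽_q be the inverse function F(x) = x^{q−2}. Let ω be a fixed element of 𝔽_4 \ 𝔽_2 regarded as an element of 𝔽_q. Then the set of vanishing flats of F is VF_F = { {0, c, cω, cω²} : c ∈ 𝔽_q^* }, and |VF_F| = (q−1)/3. -/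
/-!
In characteristic 2, for nonzero `x, y, z, x + y + z` one has
`x⁻¹ + y⁻¹ + z⁻¹ + (x + y + z)⁻¹ = (x + y)(y + z)(x + z) / (x y z (x + y + z))`,
so every vanishing flat of the inverse function contains `0`. A flat `{0, a, b, a + b}`
vanishes iff `a² + ab + b² = 0`, i.e. iff `b / a ∈ {ω, ω²}`, i.e. iff it is the `𝔽₄`-line
`a 𝔽₄`. These lines cover `𝔽_q^*` in disjoint blocks of three, whence the count `(q - 1) / 3`.
-/

namespace APNPaper

open Finset

variable {F : Type*} [Field F] [Fintype F] [DecidableEq F]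

theorem pow_card_sub_two_eq_inv_s5 {K : Type*} [Field K] [Fintype K] (hK : 2 < Fintype.card K)
    (a : K) : a ^ (Fintype.card K - 2) = a⁻¹ := by
  rcases eq_or_ne a 0 with rfl | ha
  · rw [inv_zero, zero_pow (by omega)]
  · refine eq_inv_of_mul_eq_one_left ?_
    rw [← pow_succ, show Fintype.card K - 2 + 1 = Fintype.card K - 1 by omega]
    exact FiniteField.pow_card_sub_one_eq_one a ha

section Omega

variable {K : Type*} [Field K] {ω : K}

theorem omega_ne_zero (hω : ω ^ 2 = ω + 1) : ω ≠ 0 := by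
  rintro rfl
  simp at hω

theorem one_ne_omega (hω : ω ^ 2 = ω + 1) : 1 ≠ ω := by
  rintro rfl
  exact one_ne_zero (by linear_combination -hω)

theorem one_ne_omega_sq (hω : ω ^ 2 = ω + 1) : 1 ≠ ω ^ 2 := by
  intro h
  exact omega_ne_zero hω (by linear_combination -h - hω)

theorem omega_ne_omega_sq (hω : ω ^ 2 = ω + 1) : ω ≠ ω ^ 2 := by
  intro h
  exact one_ne_zero (by linear_combination -hω - h)

variable [CharP K 2]

theorem omega_pow_three (hω : ω ^ 2 = ω + 1) : ω ^ 3 = 1 := by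
  linear_combination (ω + 1) * hω + ω * CharTwo.two_eq_zero (R := K)

theorem one_add_omega_add_omega_sq (hω : ω ^ 2 = ω + 1) : 1 + ω + ω ^ 2 = 0 := by
  linear_combination hω + (1 + ω) * CharTwo.two_eq_zero (R := K)

theorem eq_mul_omega_or_eq_mul_omega_sq (hω : ω ^ 2 = ω + 1) {a b : K}
    (h : a ^ 2 + a * b + b ^ 2 = 0) : b = a * ω ∨ b = a * ω ^ 2 := by
  have key : (b + a * ω) * (b + a * ω ^ 2) = 0 := by
    linear_combination h + (a * b + a ^ 2 * ω + a ^ 2) * hω +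
      (a * b * ω + a ^ 2 * ω) * CharTwo.two_eq_zero (R := K)
  simpa only [mul_eq_zero, CharTwo.add_eq_zero] using key

end Omega

section CharTwo

variable {K : Type*} [Field K] [CharP K 2]

theorem inv_add_inv_add_inv_add_eq_div {a b : K} (ha : a ≠ 0) (hb : b ≠ 0) (hab : a + b ≠ 0) :
    a⁻¹ + b⁻¹ + (a + b)⁻¹ = (a ^ 2 + a * b + b ^ 2) / (a * b * (a + b)) := by
  field_simp
  linear_combination (a * b) * CharTwo.two_eq_zero (R := K)

theorem inv_add_inv_add_inv_add_inv_add_eq_div {x y z : K} (hx : x ≠ 0) (hy : y ≠ 0)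
    (hz : z ≠ 0) (hw : x + y + z ≠ 0) :
    x⁻¹ + y⁻¹ + z⁻¹ + (x + y + z)⁻¹ =
      (x + y) * (y + z) * (x + z) / (x * y * z * (x + y + z)) := by
  field_simp
  linear_combination (x * y * z) * CharTwo.two_eq_zero (R := K)

theorem zero_mem_of_inv_add_inv_add_inv_add_inv_eq_zero {x y z : K} (hxy : x ≠ y) (hxz : x ≠ z)
    (hyz : y ≠ z) (h : x⁻¹ + y⁻¹ + z⁻¹ + (x + y + z)⁻¹ = 0) :
    x = 0 ∨ y = 0 ∨ z = 0 ∨ x + y + z = 0 := by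
  by_contra! hne
  obtain ⟨hx, hy, hz, hw⟩ := hne
  rw [inv_add_inv_add_inv_add_inv_add_eq_div hx hy hz hw, div_eq_zero_iff] at h
  simp only [mul_eq_zero, CharTwo.add_eq_zero, ne_eq] at h hw
  tauto

end CharTwo

section Flats

variable {K : Type*} [Field K] [DecidableEq K] {ω : K}

/-- `c 𝔽₄`, where `𝔽₄ = {0, 1, ω, ω²}`. -/
def omegaFlat (ω c : K) : Finset K := {0, c, c * ω, c * ω ^ 2}

theorem self_mem_omegaFlat (c : K) : c ∈ omegaFlat ω c := by
  simp [omegaFlat]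

theorem card_erase_zero_omegaFlat (hω : ω ^ 2 = ω + 1) {c : K} (hc : c ≠ 0) :
    ((omegaFlat ω c).erase 0).card = 3 := by
  have hω0 := omega_ne_zero hω
  rw [omegaFlat, erase_insert (by simp [eq_comm (a := (0 : K)), hc, hω0])]
  refine card_eq_three.mpr ⟨c, c * ω, c * ω ^ 2, ?_, ?_, ?_, rfl⟩ <;>
    simp only [ne_eq, mul_right_inj' hc, mul_eq_left₀ hc, eq_comm (a := c)]
  exacts [(one_ne_omega hω).symm, (one_ne_omega_sq hω).symm, omega_ne_omega_sq hω]

variable [CharP K 2]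

theorem omegaFlat_mul_omega (hω : ω ^ 2 = ω + 1) (c : K) :
    omegaFlat ω (c * ω) = omegaFlat ω c := by
  have h3 := omega_pow_three hω
  have hω2 : c * ω * ω = c * ω ^ 2 := by ring
  have hω3 : c * ω * ω ^ 2 = c := by linear_combination c * h3
  rw [omegaFlat, omegaFlat, hω2, hω3]
  ext t
  simp only [mem_insert, mem_singleton]
  tauto

theorem omegaFlat_eq_omegaFlat_iff (hω : ω ^ 2 = ω + 1) {c d : K} (hd : d ≠ 0) :
    omegaFlat ω d = omegaFlat ω c ↔ d ∈ omegaFlat ω c := by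
  refine ⟨fun h => h ▸ self_mem_omegaFlat d, fun h => ?_⟩
  simp only [omegaFlat, mem_insert, mem_singleton, hd, false_or] at h
  rcases h with rfl | rfl | rfl
  · rfl
  · exact omegaFlat_mul_omega hω c
  · rw [pow_two, ← mul_assoc, omegaFlat_mul_omega hω, omegaFlat_mul_omega hω]

theorem three_mul_card_image_omegaFlat [Fintype K] (hω : ω ^ 2 = ω + 1) :
    3 * ((univ.erase 0).image (omegaFlat ω)).card = Fintype.card K - 1 := by
  have hfiber : ∀ S ∈ (univ.erase 0).image (omegaFlat ω),
      #{d ∈ univ.erase 0 | omegaFlat ω d = S} = 3 := by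
    simp only [mem_image, mem_erase, mem_univ, and_true]
    rintro _ ⟨c, hc, rfl⟩
    rw [← card_erase_zero_omegaFlat hω hc]
    congr 1
    ext d
    simp only [mem_filter, mem_erase, mem_univ, and_true, and_congr_right_iff]
    exact fun hd => omegaFlat_eq_omegaFlat_iff hω hd
  rw [← card_univ, ← card_erase_of_mem (mem_univ 0),
    card_eq_sum_card_image (omegaFlat ω) (univ.erase 0), sum_const_nat hfiber, mul_comm]

theorem insert_zero_eq_omegaFlat (hω : ω ^ 2 = ω + 1) {a b : K} (ha : a ≠ 0) (hb : b ≠ 0)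
    (hab : a ≠ b) (h : a⁻¹ + b⁻¹ + (a + b)⁻¹ = 0) :
    ({0, a, b, a + b} : Finset K) = omegaFlat ω a := by
  have hab' : a + b ≠ 0 := by rwa [ne_eq, CharTwo.add_eq_zero]
  rw [inv_add_inv_add_inv_add_eq_div ha hb hab', div_eq_zero_iff] at h
  have hden : a * b * (a + b) ≠ 0 := mul_ne_zero (mul_ne_zero ha hb) hab'
  rcases eq_mul_omega_or_eq_mul_omega_sq hω (h.resolve_right hden) with rfl | rfl
  · rw [show a + a * ω = a * ω ^ 2 by linear_combination (-a) * hω]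
    rfl
  · rw [show a + a * ω ^ 2 = a * ω by
      linear_combination a * hω + a * CharTwo.two_eq_zero (R := K), pair_comm]
    rfl

theorem omegaFlat_mem_VF_inv [Fintype K] (hω : ω ^ 2 = ω + 1) {c : K} (hc : c ≠ 0) :
    omegaFlat ω c ∈ VF (fun x : K => x⁻¹) := by
  have hω0 := omega_ne_zero hω
  have hsum : c + c * ω = c * ω ^ 2 := by linear_combination (-c) * hω
  refine ⟨0, c, c * ω, hc.symm, (mul_ne_zero hc hω0).symm,
    fun h => one_ne_omega hω (mul_left_cancel₀ hc (by rwa [mul_one])), ?_,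
    by rw [zero_add, hsum]; rfl⟩
  have hinv : ω⁻¹ = ω ^ 2 :=
    inv_eq_of_mul_eq_one_right (by linear_combination omega_pow_three hω)
  have hinv2 : (ω ^ 2)⁻¹ = ω := by rw [← hinv, inv_inv]
  simp only [inv_zero, zero_add, hsum, mul_inv, hinv, hinv2]
  linear_combination c⁻¹ * one_add_omega_add_omega_sq hω

theorem mem_VF_inv_iff [Fintype K] (hω : ω ^ 2 = ω + 1) {S : Finset K} :
    S ∈ VF (fun x : K => x⁻¹) ↔ ∃ c, c ≠ 0 ∧ S = omegaFlat ω c := by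
  refine ⟨?_, fun ⟨c, hc, hS⟩ => hS ▸ omegaFlat_mem_VF_inv hω hc⟩
  rintro ⟨x, y, z, hxy, hxz, hyz, h, rfl⟩
  rcases zero_mem_of_inv_add_inv_add_inv_add_inv_eq_zero hxy hxz hyz h with rfl | rfl | rfl | hw
  · simp only [inv_zero, zero_add] at h ⊢
    exact ⟨y, hxy.symm, insert_zero_eq_omegaFlat hω hxy.symm hxz.symm hyz h⟩
  · simp only [inv_zero, add_zero] at h ⊢
    refine ⟨x, hxy, ?_⟩
    rw [insert_comm, insert_zero_eq_omegaFlat hω hxy hyz.symm hxz h]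
  · simp only [inv_zero, add_zero] at h ⊢
    refine ⟨x, hxz, ?_⟩
    rw [← insert_zero_eq_omegaFlat hω hxz hyz hxy h]
    ext
    simp only [mem_insert, mem_singleton]
    tauto
  · obtain rfl : z = x + y := (CharTwo.add_eq_zero.mp hw).symm
    have hx : x ≠ 0 := fun hx => hyz (by rw [hx, zero_add])
    have hy : y ≠ 0 := fun hy => hxz (by rw [hy, add_zero])
    simp only [hw, inv_zero, add_zero] at h ⊢
    refine ⟨x, hx, ?_⟩
    rw [← insert_zero_eq_omegaFlat hω hx hy hxy h]
    ext
    simp only [mem_insert, mem_singleton]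
    tauto

theorem VF_inv_eq_image [Fintype K] (hω : ω ^ 2 = ω + 1) :
    VF (fun x : K => x⁻¹) = ((univ.erase 0).image (omegaFlat ω) : Set (Finset K)) := by
  ext S
  simp only [mem_VF_inv_iff hω, coe_image, coe_erase, coe_univ, Set.mem_image, Set.mem_sdiff,
    Set.mem_univ, Set.mem_singleton_iff, true_and, eq_comm (a := S)]

end Flats

theorem stmt_5_general (n : ℕ) (heven : Even n)
    [CharP F 2] (hcard : Fintype.card F = 2 ^ n)
    (ω : F) (hω : ω ^ 2 = ω + 1) :
    VF (fun x : F => x ^ (2 ^ n - 2)) =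
      {S : Finset F | ∃ c : F, c ≠ 0 ∧ S = ({0, c, c * ω, c * ω ^ 2} : Finset F)} ∧
    3 * (VF (fun x : F => x ^ (2 ^ n - 2))).ncard = 2 ^ n - 1 := by
  have hq : 2 < Fintype.card F := by
    obtain ⟨k, rfl⟩ := heven
    rcases k with _ | k
    · simpa [hcard] using Fintype.one_lt_card (α := F)
    · rw [hcard]
      exact lt_of_le_of_lt (by omega) Nat.lt_two_pow_self
  have hinv : (fun x : F => x ^ (2 ^ n - 2)) = fun x => x⁻¹ :=
    funext fun x => hcard ▸ pow_card_sub_two_eq_inv_s5 hq x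
  rw [hinv]
  refine ⟨Set.ext fun S => mem_VF_inv_iff hω, ?_⟩
  rw [VF_inv_eq_image hω, Set.ncard_coe_finset, three_mul_card_image_omegaFlat hω, hcard]

/-- the vanishing flats of the inverse function for even `n`. -/
theorem stmt_5 (n : ℕ) (hn : 0 < n) (heven : Even n)
    [CharP F 2] (hcard : Fintype.card F = 2 ^ n)
    (ω : F) (hω : ω ^ 2 = ω + 1) :
    VF (fun x : F => x ^ (2 ^ n - 2)) =
      {S : Finset F | ∃ c : F, c ≠ 0 ∧ S = ({0, c, c * ω, c * ω ^ 2} : Finset F)} ∧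
    3 * (VF (fun x : F => x ^ (2 ^ n - 2))).ncard = 2 ^ n - 1 :=
  stmt_5_general n heven hcard ω hω

end APNPaper
end

section
/- Let n ≥ 3 be odd, q = 2^n, and α ∈ 𝔽_q^*. Then for a ∈ 𝔽_q^*, the derivative D_aF_{0,α} is 2-to-1 if and only if a = α, or a ≠ α and Tr(α/(a+α)) = 1 and Tr(α/a) = 0. Equivalently, R-Spec_q(F_{0,α}) = {α} ∪ {a ∈ 𝔽_q \ {0, α} : Tr(α/(a+α))·(Tr(α/a)+1) = 1}. -/
/-!
For `x ∉ {0, a}` one has `x⁻¹ + (x + a)⁻¹ = (a (u² + u))⁻¹` with `u = x / a`. Since `u ↦ u² + u`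
is two-to-one onto the kernel of `Tr` (additive Hilbert 90), the derivative of the inverse function
takes, off `{0, a}`, exactly the values `b ≠ 0` with `Tr (a b)⁻¹ = 0`, each on a single pair
`{x, x + a}`.

The derivative of `F_{0,α}` in direction `a ≠ α` agrees with that of the inverse function except on
the pairs `{0, a}` and `{α, α + a}`, where it takes the values `α⁻¹ + a⁻¹` and `(α + a)⁻¹`. It is
therefore 2-to-1 iff neither value is attained off `{0, a}` by the derivative of the inverse
function, i.e. iff `Tr (α / (a + α)) = 1` and `Tr (α / a + 1) = 1` (the two values differ because
`Tr 1 = 1` for odd `n`). For `a = α` both pairs are `{0, α}`, and with `0⁻¹ = 0` the two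
derivatives coincide everywhere; the derivative of the inverse function is 2-to-1, again because
`Tr 1 = 1`.
-/

theorem AddMonoidHom.range_eq_ker_of_le_of_card_eq {G H : Type*} [AddGroup G] [AddGroup H]
    [Finite G] (f : G →+ G) (g : G →+ H) (hle : f.range ≤ g.ker)
    (hcard : Nat.card f.ker = Nat.card g.range) : f.range = g.ker := by
  refine AddSubgroup.eq_of_le_of_card_ge hle (Nat.le_of_eq ?_)
  have hf := f.ker.card_mul_index
  have hg := g.ker.card_mul_index
  rw [AddSubgroup.index_ker] at hf hg
  rw [← hg, hcard, mul_comm] at hf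
  exact (Nat.eq_of_mul_eq_mul_right (hcard ▸ Nat.card_pos) hf).symm

namespace APNPaper

open Finset

section CharTwo

variable {F : Type*} [Field F] [CharP F 2]

theorem sq_add_self_eq_sq_add_self_iff {u v : F} :
    u ^ 2 + u = v ^ 2 + v ↔ v = u ∨ v = u + 1 := by
  have key : u ^ 2 + u + (v ^ 2 + v) = (v + u) * (v + (u + 1)) := by
    linear_combination (-u * v) * CharTwo.two_eq_zero (R := F)
  rw [← CharTwo.add_eq_zero, key, mul_eq_zero, CharTwo.add_eq_zero, CharTwo.add_eq_zero]

theorem sq_add_self_eq_zero_iff {u : F} : u ^ 2 + u = 0 ↔ u = 0 ∨ u = 1 := by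
  rw [sq, ← mul_add_one, mul_eq_zero, CharTwo.add_eq_zero]

end CharTwo

section Trace

variable {F : Type*} [Field F] {n : ℕ}

theorem Tr_sq [Fintype F] (hcard : Fintype.card F = 2 ^ n) (z : F) : Tr n (z ^ 2) = Tr n z := by
  have hz : z ^ 2 ^ n = z := hcard ▸ FiniteField.pow_card z
  have hshift : Tr n (z ^ 2) + z = Tr n z + z ^ 2 ^ n := by
    simp only [Tr, ← pow_mul, ← pow_succ']
    rw [← sum_range_succ (fun i => z ^ 2 ^ i), sum_range_succ', pow_zero, pow_one]
  rwa [hz, add_left_inj] at hshift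

variable [CharP F 2]

theorem Tr_add (x y : F) : Tr n (x + y) = Tr n x + Tr n y := by
  simp only [Tr, add_pow_char_pow, sum_add_distrib]

theorem Tr_one (hodd : Odd n) : Tr n (1 : F) = 1 := by
  simp [Tr, CharTwo.natCast_eq_ite n, Nat.not_even_iff_odd.2 hodd]

variable [Fintype F] (hcard : Fintype.card F = 2 ^ n)
include hcard

theorem Tr_eq_zero_or_one (z : F) : Tr n z = 0 ∨ Tr n z = 1 := by
  have hsq : Tr n z ^ 2 = Tr n (z ^ 2) := by
    simp only [Tr, CharTwo.sum_sq, ← pow_mul, mul_comm]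
  have h : Tr n z * (Tr n z + 1) = 0 := by
    rw [mul_add, mul_one, ← sq, hsq, Tr_sq hcard, CharTwo.add_self_eq_zero]
  rcases mul_eq_zero.1 h with h | h
  exacts [Or.inl h, Or.inr (CharTwo.add_eq_zero.1 h)]

theorem Tr_ne_zero_iff (z : F) : Tr n z ≠ 0 ↔ Tr n z = 1 := by
  rcases Tr_eq_zero_or_one hcard z with h | h <;> simp [h]

theorem Tr_sq_add_self (z : F) : Tr n (z ^ 2 + z) = 0 := by
  rw [Tr_add, Tr_sq hcard, CharTwo.add_self_eq_zero]

theorem exists_sq_add_self_eq (hodd : Odd n) {c : F} (hc : Tr n c = 0) :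
    ∃ z : F, z ^ 2 + z = c := by
  let f : F →+ F := AddMonoidHom.mk' (fun z => z ^ 2 + z) fun x y => by
    rw [CharTwo.add_sq]; ring
  let T : F →+ F := AddMonoidHom.mk' (Tr n) Tr_add
  have hker : (f.ker : Set F) = {0, 1} := by
    ext z
    simp [f, sq_add_self_eq_zero_iff]
  have hrange : (T.range : Set F) = {0, 1} := by
    ext z
    refine ⟨?_, ?_⟩
    · rintro ⟨w, rfl⟩; exact Tr_eq_zero_or_one hcard w
    · rintro (rfl | rfl)
      exacts [⟨0, map_zero T⟩, ⟨1, Tr_one hodd⟩]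
  have hcard_pair (S : AddSubgroup F) (hS : (S : Set F) = {0, 1}) : Nat.card S = 2 := by
    rw [← SetLike.coe_sort_coe, hS, Nat.card_coe_set_eq, Set.ncard_pair zero_ne_one]
  have heq : f.range = T.ker := by
    refine AddMonoidHom.range_eq_ker_of_le_of_card_eq f T ?_ ?_
    · rintro _ ⟨z, rfl⟩; exact Tr_sq_add_self hcard z
    · rw [hcard_pair _ hker, hcard_pair _ hrange]
  exact (heq ▸ hc : c ∈ f.range)

end Trace

section Derivative

variable {F : Type*} [Field F]

def dirDeriv (G : F → F) (a x : F) : F := G x + G (x + a)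

variable [CharP F 2]

theorem dirDeriv_add_self (G : F → F) (a x : F) : dirDeriv G a (x + a) = dirDeriv G a x := by
  rw [dirDeriv, dirDeriv, CharTwo.add_cancel_right, add_comm]

theorem dirDeriv_eq_of_eq_or_eq_add (G : F → F) {a p x : F} (hx : x = p ∨ x = p + a) :
    dirDeriv G a x = dirDeriv G a p := by
  rcases hx with rfl | rfl
  exacts [rfl, dirDeriv_add_self G a p]

theorem eq_or_eq_add_of_dirDeriv_eq {G : F → F} {a p x y : F}
    (hp : ∀ z, dirDeriv G a z = dirDeriv G a p → z = p ∨ z = p + a)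
    (hxy : dirDeriv G a x = dirDeriv G a y) (h : (x = p ∨ x = p + a) ∨ (y = p ∨ y = p + a)) :
    y = x ∨ y = x + a := by
  have hx : x = p ∨ x = p + a :=
    h.elim id fun hy => hp x (hxy.trans (dirDeriv_eq_of_eq_or_eq_add G hy))
  have hy : y = p ∨ y = p + a := hp y (hxy.symm.trans (dirDeriv_eq_of_eq_or_eq_add G hx))
  rcases hx with rfl | rfl <;> rcases hy with rfl | rfl <;> simp [CharTwo.add_cancel_right]

theorem twoToOne_iff [Fintype F] [DecidableEq F] {G : F → F} {a : F} (ha : a ≠ 0) :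
    TwoToOne G a ↔ ∀ x y, dirDeriv G a x = dirDeriv G a y → y = x ∨ y = x + a := by
  have hne (x : F) : x ≠ x + a := fun h => ha (by simpa using h)
  constructor
  · intro h x y hxy
    have hsub : {x, x + a} ⊆ univ.filter (dirDeriv G a · = dirDeriv G a x) := by
      simp [insert_subset_iff, dirDeriv_add_self]
    have hcard : (univ.filter (dirDeriv G a · = dirDeriv G a x)).card = 2 :=
      (h _).resolve_left (card_ne_zero_of_mem (hsub (mem_insert_self _ _)))
    have hy : y ∈ univ.filter (dirDeriv G a · = dirDeriv G a x) := by simp [hxy]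
    rw [← eq_of_subset_of_card_le hsub (by rw [hcard, card_pair (hne x)])] at hy
    simpa using hy
  · intro h b
    rcases (univ.filter (dirDeriv G a · = b)).eq_empty_or_nonempty with he | ⟨x, hx⟩
    · exact Or.inl (card_eq_zero.2 he)
    · obtain rfl : dirDeriv G a x = b := (mem_filter.1 hx).2
      have hfiber : univ.filter (dirDeriv G a · = dirDeriv G a x) = {x, x + a} := by
        ext y
        simp only [mem_filter, mem_univ, true_and, mem_insert, mem_singleton]
        refine ⟨h x y ∘ Eq.symm, ?_⟩
        rintro (rfl | rfl)
        exacts [rfl, dirDeriv_add_self G a x]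
      exact Or.inr ((congrArg card hfiber).trans (card_pair (hne x)))

end Derivative

section Inverse

variable {F : Type*} [Field F] [CharP F 2] {a x y : F}

theorem dirDeriv_inv_of_ne (hx : x ≠ 0) (hxa : x ≠ a) :
    dirDeriv (·⁻¹) a x = (a * ((x / a) ^ 2 + x / a))⁻¹ := by
  have hxa' : x + a ≠ 0 := fun h => hxa (CharTwo.add_eq_zero.1 h)
  simp only [dirDeriv]
  field_simp
  linear_combination x * CharTwo.two_eq_zero (R := F)

theorem dirDeriv_inv_eq_dirDeriv_inv (ha : a ≠ 0) (hx : x ≠ 0) (hxa : x ≠ a) (hy : y ≠ 0)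
    (hya : y ≠ a) (h : dirDeriv (·⁻¹) a x = dirDeriv (·⁻¹) a y) : y = x ∨ y = x + a := by
  rw [dirDeriv_inv_of_ne hx hxa, dirDeriv_inv_of_ne hy hya, inv_inj, mul_right_inj' ha,
    sq_add_self_eq_sq_add_self_iff, div_add_one ha, div_left_inj' ha, div_left_inj' ha] at h
  exact h

variable {n : ℕ} [Fintype F] (hodd : Odd n) (hcard : Fintype.card F = 2 ^ n)
include hodd hcard

theorem exists_dirDeriv_inv_eq_iff (ha : a ≠ 0) {b : F} :
    (∃ x, x ≠ 0 ∧ x ≠ a ∧ dirDeriv (·⁻¹) a x = b) ↔ b ≠ 0 ∧ Tr n (a * b)⁻¹ = 0 := by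
  have hinv (w : F) : (a * (a * w)⁻¹)⁻¹ = w := by rw [mul_inv, inv_inv, inv_mul_cancel_left₀ ha]
  constructor
  · rintro ⟨x, hx, hxa, rfl⟩
    have hu : (x / a) ^ 2 + x / a ≠ 0 := by
      rw [Ne, sq_add_self_eq_zero_iff, div_eq_one_iff_eq ha, div_eq_zero_iff]
      tauto
    rw [dirDeriv_inv_of_ne hx hxa, hinv]
    exact ⟨inv_ne_zero (mul_ne_zero ha hu), Tr_sq_add_self hcard _⟩
  · rintro ⟨hb, htr⟩
    obtain ⟨u, hu⟩ := exists_sq_add_self_eq hcard hodd htr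
    have hu01 : ¬(u = 0 ∨ u = 1) := by
      rw [← sq_add_self_eq_zero_iff, hu]
      exact inv_ne_zero (mul_ne_zero ha hb)
    refine ⟨a * u, mul_ne_zero ha (by tauto), fun h => hu01 (Or.inr ((mul_eq_left₀ ha).1 h)), ?_⟩
    rw [dirDeriv_inv_of_ne (mul_ne_zero ha (by tauto))
      (fun h => hu01 (Or.inr ((mul_eq_left₀ ha).1 h))), mul_div_cancel_left₀ u ha, hu, hinv]

theorem forall_dirDeriv_inv_ne_iff (ha : a ≠ 0) {b : F} (hb : b ≠ 0) :
    (∀ x, x ≠ 0 → x ≠ a → dirDeriv (·⁻¹) a x ≠ b) ↔ Tr n (a * b)⁻¹ = 1 := by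
  have h := (exists_dirDeriv_inv_eq_iff hodd hcard ha (b := b)).not
  push Not at h
  rw [h, forall_prop_of_true hb, Tr_ne_zero_iff hcard]

-- The solutions `0` and `a` come from the convention `0⁻¹ = 0`.
theorem dirDeriv_inv_eq_inv_iff (ha : a ≠ 0) : dirDeriv (·⁻¹) a x = a⁻¹ ↔ x = 0 ∨ x = a := by
  refine ⟨fun h => ?_, ?_⟩
  · by_contra hx
    simp only [not_or] at hx
    refine (forall_dirDeriv_inv_ne_iff hodd hcard ha (inv_ne_zero ha)).2 ?_ x hx.1 hx.2 h
    rw [mul_inv_cancel₀ ha, inv_one, Tr_one hodd]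
  · rintro (rfl | rfl) <;> simp [dirDeriv, CharTwo.add_self_eq_zero]

theorem inv_add_inv_ne_inv_add {α : F} (hα : α ≠ 0) (ha : a ≠ 0) (haα : a ≠ α) :
    α⁻¹ + a⁻¹ ≠ (α + a)⁻¹ := by
  intro h
  have : dirDeriv (·⁻¹) a α = a⁻¹ := by
    rw [dirDeriv, ← h, CharTwo.add_cancel_left]
  rcases (dirDeriv_inv_eq_inv_iff hodd hcard ha).1 this with h | h
  exacts [hα h, haα h.symm]

theorem twoToOne_inv [DecidableEq F] (ha : a ≠ 0) : TwoToOne (·⁻¹) a := by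
  rw [twoToOne_iff ha]
  intro x y hxy
  by_cases h : (x = 0 ∨ x = 0 + a) ∨ (y = 0 ∨ y = 0 + a)
  · refine eq_or_eq_add_of_dirDeriv_eq (fun z hz => ?_) hxy h
    rw [zero_add, ← dirDeriv_inv_eq_inv_iff hodd hcard ha, hz,
      dirDeriv_inv_eq_inv_iff hodd hcard ha]
    exact Or.inl rfl
  · simp only [zero_add, not_or] at h
    exact dirDeriv_inv_eq_dirDeriv_inv ha h.1.1 h.1.2 h.2.1 h.2.2 hxy

end Inverse

section Modification

variable {F : Type*} [Field F] [DecidableEq F] {α a x : F}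

theorem Fmod_zero : Fmod α 0 = α⁻¹ := by simp [Fmod]

theorem Fmod_self (hα : α ≠ 0) : Fmod α α = 0 := by simp [Fmod, hα]

theorem Fmod_of_ne (h0 : x ≠ 0) (hα : x ≠ α) : Fmod α x = x⁻¹ := by simp [Fmod, h0, hα]

variable [CharP F 2]

theorem dirDeriv_Fmod_of_ne (h0 : x ≠ 0) (ha : x ≠ a) (hα : x ≠ α) (hαa : x ≠ α + a) :
    dirDeriv (Fmod α) a x = dirDeriv (·⁻¹) a x := by
  rw [dirDeriv, dirDeriv, Fmod_of_ne h0 hα, Fmod_of_ne]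
  · exact fun h => ha (CharTwo.add_eq_zero.1 h)
  · exact fun h => hαa (CharTwo.add_eq_iff_eq_add.1 h)

theorem dirDeriv_Fmod_self (hα : α ≠ 0) : dirDeriv (Fmod α) α = dirDeriv (·⁻¹) α := by
  funext x
  by_cases hx : x = 0 ∨ x = α
  · rcases hx with rfl | rfl <;>
      simp [dirDeriv, Fmod_zero, Fmod_self hα, CharTwo.add_self_eq_zero]
  · simp only [not_or] at hx
    exact dirDeriv_Fmod_of_ne hx.1 hx.2 hx.2 (by rw [CharTwo.add_self_eq_zero]; exact hx.1)

theorem dirDeriv_Fmod_of_eq_zero_or_eq (ha : a ≠ 0) (haα : a ≠ α) (hx : x = 0 ∨ x = a) :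
    dirDeriv (Fmod α) a x = α⁻¹ + a⁻¹ := by
  rcases hx with rfl | rfl
  · rw [dirDeriv, zero_add, Fmod_zero, Fmod_of_ne ha haα]
  · rw [dirDeriv, CharTwo.add_self_eq_zero, Fmod_zero, Fmod_of_ne ha haα, add_comm]

theorem dirDeriv_Fmod_of_eq_or_eq_add (hα : α ≠ 0) (ha : a ≠ 0) (haα : a ≠ α)
    (hx : x = α ∨ x = α + a) : dirDeriv (Fmod α) a x = (α + a)⁻¹ := by
  have hαa : Fmod α (α + a) = (α + a)⁻¹ :=
    Fmod_of_ne (fun h => haα (CharTwo.add_eq_zero.1 h).symm) (by simpa using ha)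
  rcases hx with rfl | rfl
  · rw [dirDeriv, Fmod_self hα, hαa, zero_add]
  · rw [dirDeriv, CharTwo.add_cancel_right, Fmod_self hα, hαa, add_zero]

theorem twoToOne_Fmod_iff [Fintype F] (ha : a ≠ 0) :
    TwoToOne (Fmod α) a ↔
      (∀ z, dirDeriv (Fmod α) a z = dirDeriv (Fmod α) a 0 → z = 0 ∨ z = 0 + a) ∧
      (∀ z, dirDeriv (Fmod α) a z = dirDeriv (Fmod α) a α → z = α ∨ z = α + a) := by
  rw [twoToOne_iff ha]
  refine ⟨fun h => ⟨fun z hz => h 0 z hz.symm, fun z hz => h α z hz.symm⟩, ?_⟩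
  rintro ⟨h₀, h₁⟩ x y hxy
  by_cases hP₀ : (x = 0 ∨ x = 0 + a) ∨ (y = 0 ∨ y = 0 + a)
  · exact eq_or_eq_add_of_dirDeriv_eq h₀ hxy hP₀
  by_cases hP₁ : (x = α ∨ x = α + a) ∨ (y = α ∨ y = α + a)
  · exact eq_or_eq_add_of_dirDeriv_eq h₁ hxy hP₁
  simp only [zero_add, not_or] at hP₀ hP₁
  rw [dirDeriv_Fmod_of_ne hP₀.1.1 hP₀.1.2 hP₁.1.1 hP₁.1.2,
    dirDeriv_Fmod_of_ne hP₀.2.1 hP₀.2.2 hP₁.2.1 hP₁.2.2] at hxy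
  exact dirDeriv_inv_eq_dirDeriv_inv ha hP₀.1.1 hP₀.1.2 hP₀.2.1 hP₀.2.2 hxy

end Modification

section Spectrum

variable {F : Type*} [Field F] [Fintype F] [DecidableEq F] [CharP F 2] {n : ℕ}
  (hodd : Odd n) (hcard : Fintype.card F = 2 ^ n) {α a : F}
include hodd hcard

theorem twoToOne_Fmod_self (hα : α ≠ 0) : TwoToOne (Fmod α) α := by
  rw [twoToOne_iff hα, dirDeriv_Fmod_self hα, ← twoToOne_iff hα]
  exact twoToOne_inv hodd hcard hα

theorem forall_dirDeriv_Fmod_eq_zero_iff (hα : α ≠ 0) (ha : a ≠ 0) (haα : a ≠ α) :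
    (∀ z, dirDeriv (Fmod α) a z = dirDeriv (Fmod α) a 0 → z = 0 ∨ z = 0 + a) ↔
      Tr n (α / (a + α)) = 1 := by
  have hb : α⁻¹ + a⁻¹ ≠ 0 := fun h => haα (inv_injective (CharTwo.add_eq_zero.1 h)).symm
  have hTr : (a * (α⁻¹ + a⁻¹))⁻¹ = α / (a + α) := by field_simp
  rw [dirDeriv_Fmod_of_eq_zero_or_eq ha haα (Or.inl rfl), zero_add, ← hTr,
    ← forall_dirDeriv_inv_ne_iff hodd hcard ha hb]
  constructor
  · intro h x hx0 hxa hx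
    by_cases hx₁ : x = α ∨ x = α + a
    · rw [dirDeriv_eq_of_eq_or_eq_add _ hx₁, dirDeriv, add_right_inj, inv_inj] at hx
      exact hα (by simpa using hx)
    · simp only [not_or] at hx₁
      rw [← dirDeriv_Fmod_of_ne hx0 hxa hx₁.1 hx₁.2] at hx
      rcases h x hx with h | h
      exacts [hx0 h, hxa (by simpa using h)]
  · intro h z hz
    by_contra hz₀
    simp only [not_or] at hz₀
    by_cases hz₁ : z = α ∨ z = α + a
    · rw [dirDeriv_Fmod_of_eq_or_eq_add hα ha haα hz₁] at hz
      exact inv_add_inv_ne_inv_add hodd hcard hα ha haα hz.symm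
    · simp only [not_or] at hz₁
      exact h z hz₀.1 hz₀.2 (dirDeriv_Fmod_of_ne hz₀.1 hz₀.2 hz₁.1 hz₁.2 ▸ hz)

theorem forall_dirDeriv_Fmod_eq_self_iff (hα : α ≠ 0) (ha : a ≠ 0) (haα : a ≠ α) :
    (∀ z, dirDeriv (Fmod α) a z = dirDeriv (Fmod α) a α → z = α ∨ z = α + a) ↔
      Tr n (α / a) = 0 := by
  have hb : (α + a)⁻¹ ≠ 0 := inv_ne_zero fun h => haα (CharTwo.add_eq_zero.1 h).symm
  have hTr : Tr n (a * (α + a)⁻¹)⁻¹ = Tr n (α / a) + 1 := by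
    rw [mul_inv, inv_inv, ← div_eq_inv_mul, ← div_add_one ha, Tr_add, Tr_one hodd]
  rw [dirDeriv_Fmod_of_eq_or_eq_add hα ha haα (Or.inl rfl), ← add_eq_right (b := (1 : F)),
    ← hTr, ← forall_dirDeriv_inv_ne_iff hodd hcard ha hb]
  constructor
  · intro h x hx0 hxa hx
    by_cases hx₁ : x = α ∨ x = α + a
    · rw [dirDeriv_eq_of_eq_or_eq_add _ hx₁, dirDeriv, add_eq_right] at hx
      exact hα (inv_eq_zero.1 hx)
    · simp only [not_or] at hx₁
      rw [← dirDeriv_Fmod_of_ne hx0 hxa hx₁.1 hx₁.2] at hx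
      exact hx₁.1 ((h x hx).resolve_right hx₁.2)
  · intro h z hz
    by_contra hz₁
    simp only [not_or] at hz₁
    by_cases hz₀ : z = 0 ∨ z = a
    · rw [dirDeriv_Fmod_of_eq_zero_or_eq ha haα hz₀] at hz
      exact inv_add_inv_ne_inv_add hodd hcard hα ha haα hz
    · simp only [not_or] at hz₀
      exact h z hz₀.1 hz₀.2 (dirDeriv_Fmod_of_ne hz₀.1 hz₀.2 hz₁.1 hz₁.2 ▸ hz)

end Spectrum

variable {F : Type*} [Field F] [Fintype F] [DecidableEq F]

theorem stmt_6_general (n : ℕ) (hodd : Odd n)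
    [CharP F 2] (hcard : Fintype.card F = 2 ^ n)
    (α : F) (hα : α ≠ 0) :
    ∀ a : F, a ≠ 0 →
      (TwoToOne (Fmod α) a ↔
        (a = α ∨ (a ≠ α ∧ Tr n (α / (a + α)) = 1 ∧ Tr n (α / a) = 0))) := by
  intro a ha
  by_cases haα : a = α
  · subst haα
    simpa using twoToOne_Fmod_self hodd hcard hα
  · rw [twoToOne_Fmod_iff ha, forall_dirDeriv_Fmod_eq_zero_iff hodd hcard hα ha haα,
      forall_dirDeriv_Fmod_eq_self_iff hodd hcard hα ha haα]
    simp [haα]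

/-- the row spectrum of `F_{0,α}` for odd `n ≥ 3`. -/
theorem stmt_6 (n : ℕ) (hn : 3 ≤ n) (hodd : Odd n)
    [CharP F 2] (hcard : Fintype.card F = 2 ^ n)
    (α : F) (hα : α ≠ 0) :
    ∀ a : F, a ≠ 0 →
      (TwoToOne (Fmod α) a ↔
        (a = α ∨ (a ≠ α ∧ Tr n (α / (a + α)) = 1 ∧ Tr n (α / a) = 0))) :=
  stmt_6_general n hodd hcard α hα

end APNPaper
end

section
/- Let n ≥ 3 be odd, q = 2^n, and α ∈ 𝔽_q^*. Then for every x ∈ 𝔽_q there exists a ∈ 𝔽_q^* with ∇_{F_{0,α}}(a,x) ≥ 4; equivalently, the column spectrum C-Spec_q(F_{0,α}) is empty. -/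
/-!
Away from `0` and `α`, `F_{0,α}` is the inverse function, and `p⁻¹ + (p + a)⁻¹ = (a (z² + z))⁻¹`
for `p = a z`. So it suffices to exhibit, for each `x`, a direction `a` and a second pair
`{p, p + a}` on which `D_a F_{0,α}` takes the value `D_a F_{0,α}(x)`; each case reduces to solving
`z² + z = t`. In characteristic 2 the Artin–Schreier map `z ↦ z² + z` is additive with kernel
`{0, 1}`, so its image has index 2, and for odd `n` it misses `1` (a root of `z² + z + 1` would
satisfy `z = z^(2^n) = z²`). Hence one of `t`, `t + 1` is always a value, which settles `x ∉ {0, α}`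
with `t = α / (α + x)`; for `x ∈ {0, α}` any `z ∉ {0, 1}` works.
-/

namespace APNPaper

open Finset

variable {F : Type*} [Field F] [Fintype F] [DecidableEq F]

theorem four_le_nabla_of_collision [CharP F 2] (G : F → F) {a x p : F} (ha : a ≠ 0)
    (hpx : p ≠ x) (hpxa : p ≠ x + a) (h : G p + G (p + a) = G x + G (x + a)) :
    4 ≤ nabla G a x := by
  have hfiber : ({x, x + a, p, p + a} : Finset F) ⊆
      univ.filter fun y => G y + G (y + a) = G x + G (x + a) := by
    intro y hy
    simp only [mem_insert, mem_singleton] at hy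
    simp only [mem_filter, mem_univ, true_and]
    rcases hy with rfl | rfl | rfl | rfl <;> grind
  have hcard : ({x, x + a, p, p + a} : Finset F).card = 4 := by
    rw [card_eq_four]
    exact ⟨x, x + a, p, p + a, by grind, by grind, by grind, by grind, by grind, by grind, rfl⟩
  exact hcard ▸ card_le_card hfiber

section ArtinSchreier

variable {K : Type*} [Field K] [CharP K 2]

def artinSchreier : K →+ K where
  toFun z := z ^ 2 + z
  map_zero' := by simp
  map_add' y z := by rw [CharTwo.add_sq]; ring

@[simp]
theorem artinSchreier_apply (z : K) : artinSchreier z = z ^ 2 + z := rfl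

theorem coe_ker_artinSchreier : ((artinSchreier : K →+ K).ker : Set K) = {0, 1} := by
  ext z
  simp only [SetLike.mem_coe, AddMonoidHom.mem_ker, artinSchreier_apply, Set.mem_insert_iff,
    Set.mem_singleton_iff]
  grind

theorem card_ker_artinSchreier : Nat.card (artinSchreier : K →+ K).ker = 2 := by
  rw [← SetLike.coe_sort_coe, coe_ker_artinSchreier, Nat.card_coe_set_eq,
    Set.ncard_pair zero_ne_one]

theorem index_range_artinSchreier [Finite K] : (artinSchreier : K →+ K).range.index = 2 := by
  have hker := AddSubgroup.card_mul_index (artinSchreier : K →+ K).ker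
  have hrange := AddSubgroup.card_mul_index (artinSchreier : K →+ K).range
  rw [card_ker_artinSchreier, AddSubgroup.index_ker] at hker
  exact Nat.eq_of_mul_eq_mul_left Nat.card_pos (by rw [hrange, ← hker, mul_comm])

theorem pow_two_pow_two_mul_eq_self {z : K} (hz : z ^ 2 = z + 1) (k : ℕ) :
    z ^ 2 ^ (2 * k) = z := by
  induction k with
  | zero => simp
  | succ k ih => rw [mul_add, pow_add, pow_mul, ih]; grind

theorem sq_add_self_ne_one {n : ℕ} [Fintype K] (hodd : Odd n) (hcard : Fintype.card K = 2 ^ n)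
    (z : K) : z ^ 2 + z ≠ 1 := by
  intro hz
  obtain ⟨k, rfl⟩ := hodd
  have hfrob := FiniteField.pow_card z
  rw [hcard, pow_succ, pow_mul, pow_two_pow_two_mul_eq_self (by grind) k] at hfrob
  grind

theorem mem_range_artinSchreier_or_add_one_mem {n : ℕ} [Fintype K] (hodd : Odd n)
    (hcard : Fintype.card K = 2 ^ n) (t : K) :
    t ∈ (artinSchreier : K →+ K).range ∨ t + 1 ∈ (artinSchreier : K →+ K).range := by
  have hone : (1 : K) ∉ (artinSchreier : K →+ K).range := by
    rintro ⟨z, hz⟩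
    exact sq_add_self_ne_one hodd hcard z hz
  rw [AddSubgroup.add_mem_iff_of_index_two index_range_artinSchreier]
  tauto

end ArtinSchreier

theorem exists_ne_zero_ne_one {K : Type*} [Zero K] [One K] [Fintype K] [DecidableEq K]
    (h : 2 < Fintype.card K) : ∃ z : K, z ≠ 0 ∧ z ≠ 1 := by
  obtain ⟨z, -, hz⟩ := exists_mem_notMem_of_card_lt_card (s := {0, 1}) (t := univ)
    ((card_le_two).trans_lt h)
  simp only [mem_insert, mem_singleton, not_or] at hz
  exact ⟨z, hz⟩

section Fmod

variable [CharP F 2] {α : F}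

theorem exists_four_le_nabla_Fmod_zero (hα : α ≠ 0) {z : F} (hz0 : z ≠ 0) (hz1 : z ≠ 1)
    (hz : z ^ 2 + z ≠ 1) : ∃ a, a ≠ 0 ∧ 4 ≤ nabla (Fmod α) a 0 := by
  -- `α⁻¹ + a⁻¹ = (a (z² + z))⁻¹`
  set a := α * (z ^ 2 + z + 1) / (z ^ 2 + z)
  refine ⟨a, ?_, four_le_nabla_of_collision _ (p := a * z) ?_ ?_ ?_ ?_⟩ <;> grind [Fmod]

theorem exists_four_le_nabla_Fmod_self (hα : α ≠ 0) {z : F} (hz0 : z ≠ 0) (hz1 : z ≠ 1)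
    (hz : z ^ 2 + z ≠ 1) : ∃ a, a ≠ 0 ∧ 4 ≤ nabla (Fmod α) a α := by
  -- `(α + a)⁻¹ = (a (z² + z))⁻¹`
  set a := α / (z ^ 2 + z + 1)
  refine ⟨a, ?_, four_le_nabla_of_collision _ (p := a * z) ?_ ?_ ?_ ?_⟩ <;> grind [Fmod]

theorem exists_four_le_nabla_Fmod_of_ne {n : ℕ} (hodd : Odd n) (hcard : Fintype.card F = 2 ^ n)
    (hα : α ≠ 0) {x : F} (hx0 : x ≠ 0) (hxα : x ≠ α) :
    ∃ a, a ≠ 0 ∧ 4 ≤ nabla (Fmod α) a x := by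
  rcases mem_range_artinSchreier_or_add_one_mem hodd hcard (α / (α + x)) with ⟨z, hz⟩ | ⟨z, hz⟩
  · -- `{0, x z}` collides with `{x, x + x z}`
    rw [artinSchreier_apply] at hz
    refine ⟨x * z, ?_, four_le_nabla_of_collision _ (p := 0) ?_ ?_ ?_ ?_⟩ <;> grind [Fmod]
  · -- `{α, α + a}` collides with `{x, x + a}` for `a = (x + α) z²`
    rw [artinSchreier_apply] at hz
    refine ⟨(x + α) * z ^ 2, ?_, four_le_nabla_of_collision _ (p := α) ?_ ?_ ?_ ?_⟩ <;>
      grind [Fmod]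

end Fmod

/-- for odd `n ≥ 3` the column spectrum of `F_{0,α}` is empty. -/
theorem stmt_8 (n : ℕ) (hn : 3 ≤ n) (hodd : Odd n)
    [CharP F 2] (hcard : Fintype.card F = 2 ^ n)
    (α : F) (hα : α ≠ 0) :
    (∀ x : F, ∃ a : F, a ≠ 0 ∧ 4 ≤ nabla (Fmod α) a x) ∧
    {x : F | ∀ a : F, a ≠ 0 → nabla (Fmod α) a x = 2} = ∅ := by
  have hcol (x : F) : ∃ a : F, a ≠ 0 ∧ 4 ≤ nabla (Fmod α) a x := by
    have h2 : 2 < Fintype.card F := by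
      have := Nat.pow_le_pow_right two_pos hn
      omega
    obtain ⟨z, hz0, hz1⟩ := exists_ne_zero_ne_one h2
    have hz := sq_add_self_ne_one hodd hcard z
    by_cases hx0 : x = 0
    · subst hx0
      exact exists_four_le_nabla_Fmod_zero hα hz0 hz1 hz
    by_cases hxα : x = α
    · subst hxα
      exact exists_four_le_nabla_Fmod_self hα hz0 hz1 hz
    exact exists_four_le_nabla_Fmod_of_ne hodd hcard hα hx0 hxα
  refine ⟨hcol, Set.eq_empty_of_forall_notMem fun x hx => ?_⟩
  obtain ⟨a, ha, h4⟩ := hcol x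
  have := hx a ha
  omega

end APNPaper
end
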